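/- arXiv:1711.07926 — 6 statements merged into one kernel-verified Lean document; each statement's English description precedes it below -/
import Mathlib

section
/- For real c with |c| < 1/2 and all real θ, the quantity Δ² := 2c²cos(4θ) + 38c² + 8(c-1)(3c-1)cos(2θ) - 32c + 8 is nonnegative, so Δ = √(Δ²) is real. -/
open Real

/-- For `|c| < 1/2` and all real `θ`, the discriminant
`Δ² = 2c²cos4θ + 38c² + 8(c-1)(3c-1)cos2θ - 32c + 8` is nonnegative,
so `Δ = √(Δ²)` is real, i.e. `(√Δ²)² = Δ²`. -/
theorem stmt_4 (c θ : ℝ) (hc : |c| < 1 / 2) :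
    0 ≤ 2 * c ^ 2 * Real.cos (4 * θ) + 38 * c ^ 2 +
        8 * (c - 1) * (3 * c - 1) * Real.cos (2 * θ) - 32 * c + 8 ∧
    Real.sqrt (2 * c ^ 2 * Real.cos (4 * θ) + 38 * c ^ 2 +
        8 * (c - 1) * (3 * c - 1) * Real.cos (2 * θ) - 32 * c + 8) ^ 2 =
      2 * c ^ 2 * Real.cos (4 * θ) + 38 * c ^ 2 +
        8 * (c - 1) * (3 * c - 1) * Real.cos (2 * θ) - 32 * c + 8 := by
  have h4 : Real.cos (4 * θ) = 2 * Real.cos (2 * θ) ^ 2 - 1 := by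
    have := Real.cos_two_mul (2 * θ)
    rw [show 2 * (2 * θ) = 4 * θ by ring] at this
    linarith
  set x := Real.cos (2 * θ) with hxdef
  have hx1 : x ≤ 1 := Real.cos_le_one _
  have hx2 : -1 ≤ x := Real.neg_one_le_cos _
  obtain ⟨hc1, hc2⟩ := abs_lt.mp hc
  have key : 0 ≤ 2 * c ^ 2 * Real.cos (4 * θ) + 38 * c ^ 2 +
      8 * (c - 1) * (3 * c - 1) * x - 32 * c + 8 := by
    rw [h4]
    nlinarith [sq_nonneg (2*c*x + 2*(3*c^2 - 4*c + 1)), sq_nonneg (1 - x),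
      sq_nonneg (1 + x), sq_nonneg c, sq_nonneg (c*(1-x)), sq_nonneg (c*(1+x)),
      mul_nonneg (mul_nonneg (sub_nonneg.2 hx1) (by linarith : (0:ℝ) ≤ x + 1)) (sq_nonneg c),
      sq_nonneg (2*c - 1), sq_nonneg (2*c+1),
      mul_nonneg (sub_nonneg.2 hx1) (sq_nonneg (2*c-1)),
      mul_nonneg (by linarith : (0:ℝ) ≤ x + 1) (sq_nonneg (2*c-1))]
  exact ⟨key, Real.sq_sqrt key⟩
end

section
/- For real c with |c| < 1/2 and all real θ, both eigenvalues Q̂_{1,2} = ( -4 + 2c(cos(2θ) + 3) ± Δ ) / (2 s²) are real and nonpositive, where Δ = √(2c²cos(4θ) + 38c² + 8(c-1)(3c-1)cos(2θ) - 32c + 8) and s > 0. -/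
open Real

/-- For `|c| < 1/2`, `s > 0`, both eigenvalues
`Q̂_{1,2} = (-4 + 2c(cos2θ+3) ± Δ)/(2s²)` are (real and) nonpositive. -/
theorem stmt_5 (c θ s : ℝ) (hc : |c| < 1 / 2) (hs : 0 < s) :
    (-4 + 2 * c * (Real.cos (2 * θ) + 3) +
        Real.sqrt (2 * c ^ 2 * Real.cos (4 * θ) + 38 * c ^ 2 +
          8 * (c - 1) * (3 * c - 1) * Real.cos (2 * θ) - 32 * c + 8)) /
      (2 * s ^ 2) ≤ 0 ∧
    (-4 + 2 * c * (Real.cos (2 * θ) + 3) -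
        Real.sqrt (2 * c ^ 2 * Real.cos (4 * θ) + 38 * c ^ 2 +
          8 * (c - 1) * (3 * c - 1) * Real.cos (2 * θ) - 32 * c + 8)) /
      (2 * s ^ 2) ≤ 0 := by
  obtain ⟨hc1, hc2⟩ := abs_lt.mp hc
  have hx1 : Real.cos (2 * θ) ≤ 1 := Real.cos_le_one _
  have hx2 : -1 ≤ Real.cos (2 * θ) := Real.neg_one_le_cos _
  have h4 : Real.cos (4 * θ) = 2 * Real.cos (2 * θ) ^ 2 - 1 := by
    rw [show (4 : ℝ) * θ = 2 * (2 * θ) by ring, Real.cos_two_mul]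
  set x := Real.cos (2 * θ)
  have ha : -4 + 2 * c * (x + 3) < 0 := by nlinarith
  have hΔ : 2 * c ^ 2 * Real.cos (4 * θ) + 38 * c ^ 2 +
      8 * (c - 1) * (3 * c - 1) * x - 32 * c + 8 ≤ (-(-4 + 2 * c * (x + 3))) ^ 2 := by
    rw [h4]; nlinarith
  have hsq : Real.sqrt (2 * c ^ 2 * Real.cos (4 * θ) + 38 * c ^ 2 +
      8 * (c - 1) * (3 * c - 1) * x - 32 * c + 8) ≤ -(-4 + 2 * c * (x + 3)) := by
    have := Real.sqrt_le_sqrt hΔ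
    rwa [Real.sqrt_sq (by linarith)] at this
  have hden : 0 < 2 * s ^ 2 := by positivity
  constructor
  · apply div_nonpos_of_nonpos_of_nonneg _ hden.le
    linarith
  · apply div_nonpos_of_nonpos_of_nonneg _ hden.le
    have := Real.sqrt_nonneg (2 * c ^ 2 * Real.cos (4 * θ) + 38 * c ^ 2 +
      8 * (c - 1) * (3 * c - 1) * x - 32 * c + 8)
    linarith
end

section
/- The symbol of the standard second-difference operator combined with the c-correction, Q̂₁(ω) = ( -4 + 2c(cos(2θ)+3) + Δ )/(2(h/2)²) with θ = (h/2)ω, has the Taylor expansion Q̂₁(ω) = -ω² + ((1+4c)/(12-24c)) ω⁴ (h/2)² + O(h⁴) as h → 0 for fixed ω, provided c ≠ 1/2. -/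
/-!
Put `y = 1 - cos (ω h)`, so that `0 ≤ y ≤ ω²h²/2` and `y = ω²h²/2 - ω⁴h⁴/24 + O(h⁶)`. In terms of
`y` the radicand is the quadratic `a² - (a²/2) y + 4c² y²` with `a = 4 - 8c > 0`, so its square
root equals its second-order Taylor polynomial `a - (a/4) y + q y²`, `q = (4c - 1)/(8(1 - 2c))`,
up to `O(y³) = O(h⁶)`. The numerator is therefore
`-y + q y² + O(h⁶) = -ω²h²/2 + (1/24 + q/4) ω⁴h⁴ + O(h⁶)`, and dividing by `h²/2` gives the
expansion, because `8 (1/24 + q/4) = (1 + 4c)/(12 - 24c)`.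
-/

open Real Asymptotics Filter Topology

open Finset in
theorem Complex.cos_bound_six {x : ℂ} (hx : ‖x‖ ≤ 1) :
    ‖cos x - (1 - x ^ 2 / 2 + x ^ 4 / 24)‖ ≤ ‖x‖ ^ 6 * (7 / 4320) :=
  calc
    ‖cos x - (1 - x ^ 2 / 2 + x ^ 4 / 24)‖ =
        ‖(exp (-x * I) - ∑ m ∈ range 6, (-x * I) ^ m / m.factorial) / 2 +
         (exp (x * I) - ∑ m ∈ range 6, (x * I) ^ m / m.factorial) / 2‖ := by
      simp [cos, field, Finset.sum_range_succ, Nat.factorial]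
      grind [I_sq, two_ne_zero]
    _ ≤ ‖exp (-x * I) - ∑ m ∈ range 6, (-x * I) ^ m / m.factorial‖ / 2 +
        ‖exp (x * I) - ∑ m ∈ range 6, (x * I) ^ m / m.factorial‖ / 2 := by
      grw [norm_add_le]
      simp
    _ ≤ ‖-x * I‖ ^ 6 * (Nat.succ 6 * (Nat.factorial 6 * (6 : ℕ) : ℝ)⁻¹) / 2 +
        ‖x * I‖ ^ 6 * (Nat.succ 6 * (Nat.factorial 6 * (6 : ℕ) : ℝ)⁻¹) / 2 := by
      grw [exp_bound (by simpa) (by simp), exp_bound (by simpa) (by simp)]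
    _ = ‖x‖ ^ 6 * (7 / 4320) := by norm_num [Nat.factorial]

theorem Real.cos_bound_six {x : ℝ} (hx : |x| ≤ 1) :
    |cos x - (1 - x ^ 2 / 2 + x ^ 4 / 24)| ≤ |x| ^ 6 * (7 / 4320) := by
  have h := Complex.cos_bound_six (x := x) (by rwa [Complex.norm_real])
  rw [← Complex.ofReal_cos] at h
  exact_mod_cast h

theorem Real.cos_sub_taylor_isBigO :
    (fun x : ℝ => cos x - (1 - x ^ 2 / 2 + x ^ 4 / 24)) =O[𝓝 0] fun x => x ^ 6 := by
  refine IsBigO.of_bound (7 / 4320) ?_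
  filter_upwards [Metric.closedBall_mem_nhds (0 : ℝ) one_pos] with x hx
  rw [Metric.mem_closedBall, dist_zero_right] at hx
  simpa [mul_comm] using Real.cos_bound_six hx

/-- Also true for `x < 0`, where `√x = 0`. -/
theorem Real.abs_sqrt_sub_le {x y : ℝ} (hy : 0 < y) : |√x - y| ≤ |x - y ^ 2| / y := by
  rw [le_div_iff₀ hy]
  rcases le_or_gt x 0 with hx | hx
  · rw [sqrt_eq_zero'.2 hx, zero_sub, abs_neg, abs_of_pos hy, abs_of_nonpos (by nlinarith)]
    nlinarith
  · have hsq : x - y ^ 2 = (√x - y) * (√x + y) := by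
      nth_rewrite 1 [← sq_sqrt hx.le]; ring
    rw [hsq, abs_mul, abs_of_pos (by positivity : 0 < √x + y)]
    gcongr
    linarith [sqrt_nonneg x]

theorem Real.isBigO_sqrt_sub {α : Type*} {l : Filter α} {f g : α → ℝ} {a : ℝ} (ha : 0 < a)
    (hg : Tendsto g l (𝓝 a)) : (fun x => √(f x) - g x) =O[l] fun x => f x - g x ^ 2 := by
  refine IsBigO.of_bound (2 / a) ?_
  filter_upwards [hg.eventually (lt_mem_nhds (half_lt_self ha))] with x hx
  rw [norm_eq_abs, norm_eq_abs]
  calc |√(f x) - g x| ≤ |f x - g x ^ 2| / g x := abs_sqrt_sub_le (by linarith)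
    _ ≤ |f x - g x ^ 2| / (a / 2) := by gcongr
    _ = 2 / a * |f x - g x ^ 2| := by ring

theorem sqrt_quadratic_sub_taylor_isBigO {a : ℝ} (ha : 0 < a) (b d : ℝ) :
    (fun y => √(a ^ 2 + b * y + d * y ^ 2) -
      (a + b / (2 * a) * y + (d - (b / (2 * a)) ^ 2) / (2 * a) * y ^ 2))
      =O[𝓝 0] fun y => y ^ 3 := by
  set p := b / (2 * a)
  set q := (d - p ^ 2) / (2 * a)
  have hP : Tendsto (fun y => a + p * y + q * y ^ 2) (𝓝 0) (𝓝 a) := by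
    have : Continuous (fun y : ℝ => a + p * y + q * y ^ 2) := by fun_prop
    simpa using this.tendsto 0
  have hrem : (fun y : ℝ => -2 * p * q - q ^ 2 * y) =O[𝓝 0] (fun _ => (1 : ℝ)) :=
    (Continuous.tendsto (by fun_prop) 0).isBigO_one ℝ
  -- `a² + b y + d y² - (a + p y + q y²)² = y³ (-2pq - q² y)`
  refine (isBigO_sqrt_sub ha hP).trans (((isBigO_refl (fun y : ℝ => y ^ 3) _).mul hrem).congr
    (fun y => ?_) (fun y => mul_one _))
  simp only [p, q]
  field_simp
  ring

theorem one_sub_cos_mul_isBigO (ω : ℝ) : (fun h => 1 - cos (ω * h)) =O[𝓝 0] fun h => h ^ 2 := by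
  refine IsBigO.of_bound (ω ^ 2 / 2) (Eventually.of_forall fun h => ?_)
  have hle := one_sub_sq_div_two_le_cos (x := ω * h)
  rw [norm_eq_abs, norm_eq_abs, abs_of_nonneg (sub_nonneg.2 (cos_le_one _)),
    abs_of_nonneg (sq_nonneg h)]
  linarith

theorem one_sub_cos_mul_sub_taylor_isBigO (ω : ℝ) :
    (fun h => 1 - cos (ω * h) - (ω ^ 2 / 2 * h ^ 2 + -ω ^ 4 / 24 * h ^ 4)) =O[𝓝 0]
      fun h => h ^ 6 := by
  have hω : Tendsto (fun h : ℝ => ω * h) (𝓝 0) (𝓝 0) := by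
    simpa using (continuous_const_mul ω).tendsto 0
  refine ((cos_sub_taylor_isBigO.comp_tendsto hω).neg_left.trans
    ((isBigO_const_mul_self (ω ^ 6) (fun h : ℝ => h ^ 6) _).congr_left fun h => ?_)).congr_left
    fun h => ?_
  all_goals simp only [Function.comp_apply]; ring

theorem sq_sub_isBigO_of_sub_isBigO {y : ℝ → ℝ} {A B : ℝ}
    (hy : (fun x => y x - (A * x ^ 2 + B * x ^ 4)) =O[𝓝 0] fun x => x ^ 6) :
    (fun x => y x ^ 2 - (A * x ^ 2) ^ 2) =O[𝓝 0] fun x => x ^ 6 := by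
  have h4 : (fun x => y x - A * x ^ 2) =O[𝓝 0] fun x => x ^ 4 :=
    ((hy.trans (isLittleO_pow_pow (by norm_num)).isBigO).add
      (isBigO_const_mul_self B _ _)).congr_left fun x => by ring
  have h2 : (fun x => y x + A * x ^ 2) =O[𝓝 0] fun x => x ^ 2 :=
    ((h4.trans (isLittleO_pow_pow (by norm_num)).isBigO).add
      (isBigO_const_mul_self (2 * A) _ _)).congr_left fun x => by ring
  exact (h4.mul h2).congr (fun x => by ring) (fun x => by ring)

theorem isBigO_div_sq_sub {f g : ℝ → ℝ} {n : ℕ}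
    (h : (fun x => f x - g x * x ^ 2) =O[𝓝 0] fun x => x ^ (n + 2)) :
    (fun x => f x / x ^ 2 - g x) =O[𝓝[≠] 0] fun x => x ^ n := by
  refine ((h.mono nhdsWithin_le_nhds).mul (isBigO_refl (fun x : ℝ => (x ^ 2)⁻¹) _)).congr'
    ?_ ?_ <;> filter_upwards [self_mem_nhdsWithin] with x (hx : x ≠ 0) <;> field_simp
  ring

theorem radicand_eq_quadratic_one_sub_cos (c ω h : ℝ) :
    2 * c ^ 2 * cos (4 * (ω * h / 2)) + 38 * c ^ 2 +
      8 * (c - 1) * (3 * c - 1) * cos (2 * (ω * h / 2)) - 32 * c + 8 =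
    (4 - 8 * c) ^ 2 + -(4 - 8 * c) ^ 2 / 2 * (1 - cos (ω * h)) +
      4 * c ^ 2 * (1 - cos (ω * h)) ^ 2 := by
  rw [show 4 * (ω * h / 2) = 2 * (ω * h) by ring, show 2 * (ω * h / 2) = ω * h by ring,
    cos_two_mul]
  ring

theorem two_mul_symbol_numerator_sub_isBigO {c : ℝ} (ω : ℝ) (hc : c < 1 / 2) :
    (fun h : ℝ => 2 * (-4 + 2 * c * (cos (2 * (ω * h / 2)) + 3) +
        √(2 * c ^ 2 * cos (4 * (ω * h / 2)) + 38 * c ^ 2 +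
          8 * (c - 1) * (3 * c - 1) * cos (2 * (ω * h / 2)) - 32 * c + 8)) -
      (-ω ^ 2 + (1 + 4 * c) / (12 - 24 * c) * ω ^ 4 * (h / 2) ^ 2) * h ^ 2)
      =O[𝓝 0] fun h => h ^ 6 := by
  have ha : 0 < 4 - 8 * c := by linarith
  have hy := one_sub_cos_mul_sub_taylor_isBigO ω
  have hy0 : Tendsto (fun h => 1 - cos (ω * h)) (𝓝 0) (𝓝 0) :=
    (one_sub_cos_mul_isBigO ω).trans_tendsto
      ((continuous_pow 2).tendsto' 0 0 (zero_pow two_ne_zero))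
  have hsqrt :=
    ((sqrt_quadratic_sub_taylor_isBigO ha (-(4 - 8 * c) ^ 2 / 2) (4 * c ^ 2)).comp_tendsto
      hy0).trans (((one_sub_cos_mul_isBigO ω).pow 3).congr_right fun h => (pow_mul h 2 3).symm)
  have hy2 := sq_sub_isBigO_of_sub_isBigO hy
  -- `(4c - 1)/(4(1 - 2c)) = 2q`
  refine (((hsqrt.const_mul_left 2).add (hy.const_mul_left (-2))).add
    (hy2.const_mul_left ((4 * c - 1) / (4 * (1 - 2 * c))))).congr_left fun h => ?_
  have h12 : 1 - 2 * c ≠ 0 := by linarith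
  rw [Function.comp_apply, radicand_eq_quadratic_one_sub_cos,
    show 2 * (ω * h / 2) = ω * h by ring, show (12 : ℝ) - 24 * c = 12 * (1 - 2 * c) by ring]
  field_simp
  ring

/-- Taylor expansion of the symbol `Q̂₁`: with `θ = ωh/2` and `|c| < 1/2`,
`Q̂₁(ω) = -ω² + ((1+4c)/(12-24c)) ω⁴ (h/2)² + O(h⁴)` as `h → 0`. -/
theorem stmt_6 (c ω : ℝ) (hc : |c| < 1 / 2) :
    (fun h : ℝ =>
        (-4 + 2 * c * (Real.cos (2 * (ω * h / 2)) + 3) +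
            Real.sqrt (2 * c ^ 2 * Real.cos (4 * (ω * h / 2)) + 38 * c ^ 2 +
              8 * (c - 1) * (3 * c - 1) * Real.cos (2 * (ω * h / 2)) - 32 * c + 8)) /
          (2 * (h / 2) ^ 2) -
        (-ω ^ 2 + (1 + 4 * c) / (12 - 24 * c) * ω ^ 4 * (h / 2) ^ 2))
      =O[nhdsWithin 0 (Set.Ioi 0)] fun h : ℝ => h ^ 4 := by
  have hexp := isBigO_div_sq_sub (n := 4)
    (two_mul_symbol_numerator_sub_isBigO ω (lt_of_abs_lt hc))
  refine (hexp.mono (nhdsWithin_mono _ fun h (hh : 0 < h) => hh.ne')).congr_left fun h => ?_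
  ring
end

section
/- The second eigenvalue Q̂₂(ω) = ( -4 + 2c(cos(2θ)+3) - Δ )/(2(h/2)²) satisfies Q̂₂(ω) = -(4-8c)/(h/2)² + (1-4c)ω² + O(h²) as h → 0 for fixed ω; in particular for |c| < 1/2, Q̂₂(ω) → -∞ at rate h⁻², so the corresponding error mode decays like e^{-(4-8c)t/(h/2)²}. -/
open Real Asymptotics

set_option maxHeartbeats 1000000 in
/-- The second eigenvalue satisfies
`Q̂₂(ω) = -(4-8c)/(h/2)² + (1-4c)ω² + O(h²)` as `h → 0⁺`, for `|c| < 1/2`. -/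
theorem stmt_8 (c ω : ℝ) (hc : |c| < 1 / 2) :
    (fun h : ℝ =>
        (-4 + 2 * c * (Real.cos (2 * (ω * h / 2)) + 3) -
            Real.sqrt (2 * c ^ 2 * Real.cos (4 * (ω * h / 2)) + 38 * c ^ 2 +
              8 * (c - 1) * (3 * c - 1) * Real.cos (2 * (ω * h / 2)) - 32 * c + 8)) /
          (2 * (h / 2) ^ 2) -
        (-(4 - 8 * c) / (h / 2) ^ 2 + (1 - 4 * c) * ω ^ 2))
      =O[nhdsWithin 0 (Set.Ioi 0)] fun h : ℝ => h ^ 2 := by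
  obtain ⟨hc1, hc2⟩ := abs_lt.mp hc
  have hd : (0:ℝ) < 4 - 8 * c := by linarith
  set ε : ℝ := min (1/4) (min ((4 - 8*c)/16) ((4 - 8*c)^2/128)) with hεdef
  have hεpos : 0 < ε := lt_min (by norm_num) (lt_min (by linarith) (by positivity))
  set δ : ℝ := Real.sqrt ε / (|ω| + 1) with hδdef
  have hωpos : (0:ℝ) < |ω| + 1 := by positivity
  have hδpos : 0 < δ := div_pos (Real.sqrt_pos.mpr hεpos) hωpos
  rw [Asymptotics.isBigO_iff]
  refine ⟨28 * ω^4 / (4 - 8*c), ?_⟩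
  filter_upwards [Ioo_mem_nhdsGT_of_mem (Set.left_mem_Ico.mpr hδpos)] with h hh
  obtain ⟨h0, hhδ⟩ := hh
  simp only [Real.norm_eq_abs]
  set θ := ω * h / 2 with hθdef
  -- basic smallness of θ²
  have hθ2 : θ^2 ≤ ε := by
    have hh2 : h^2 ≤ δ^2 := by nlinarith
    have hδ2 : δ^2 = ε / (|ω|+1)^2 := by rw [hδdef, div_pow, Real.sq_sqrt hεpos.le]
    have hω2 : ω^2 ≤ (|ω|+1)^2 := by nlinarith [abs_nonneg ω, sq_abs ω]
    have t1 : ω^2 * h^2 ≤ (|ω|+1)^2 * h^2 := by nlinarith [sq_nonneg h]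
    have t2 : (|ω|+1)^2 * h^2 ≤ (|ω|+1)^2 * (ε/(|ω|+1)^2) :=
      mul_le_mul_of_nonneg_left (hh2.trans_eq hδ2) (by positivity)
    have t3 : (|ω|+1)^2 * (ε/(|ω|+1)^2) = ε := by field_simp
    rw [hθdef]
    nlinarith [hεpos.le]
  have hθ0 : 0 ≤ θ^2 := sq_nonneg θ
  have hθa : θ^2 ≤ 1/4 := hθ2.trans (min_le_left _ _)
  have hθb : θ^2 ≤ (4-8*c)/16 := hθ2.trans ((min_le_right _ _).trans (min_le_left _ _))
  have hθc : θ^2 ≤ (4-8*c)^2/128 := hθ2.trans ((min_le_right _ _).trans (min_le_right _ _))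
  clear hθ2 hεpos hδpos hεdef hδdef hωpos hhδ hc
  clear ε δ
  -- cosine estimates
  have habs2θ : |2*θ| ≤ 1 := by
    rw [abs_le]
    constructor
    · nlinarith [hθa, sq_nonneg (2*θ + 1)]
    · nlinarith [hθa, sq_nonneg (2*θ - 1)]
  have hcos := Real.cos_bound habs2θ
  set u := Real.cos (2*θ) with hudef
  have h16 : |2*θ|^4 = 16*θ^4 := by
    rw [pow_abs, abs_of_nonneg (by positivity : (0:ℝ) ≤ (2*θ)^4)]; ring
  have hw : |u - 1 + 2*θ^2| ≤ 5/6 * θ^4 := by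
    have he : u - (1 - (2*θ)^2/2) = u - 1 + 2*θ^2 := by ring
    rw [he, h16] at hcos
    linarith
  obtain ⟨hw1, hw2⟩ := abs_le.mp hw
  have hu1 : u ≤ 1 := Real.cos_le_one _
  have hu2 : -1 ≤ u := Real.neg_one_le_cos _
  have hθ4le : θ^4 ≤ (1/4) * θ^2 := by
    calc θ^4 = θ^2 * θ^2 := by ring
      _ ≤ θ^2 * (1/4) := mul_le_mul_of_nonneg_left hθa hθ0
      _ = (1/4) * θ^2 := by ring
  have haux1 : 1 - u ≤ 3*θ^2 := by linarith
  -- rewrite the sqrt argument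
  have h4θ : Real.cos (4*θ) = 2*u^2 - 1 := by
    rw [hudef, show (4:ℝ)*θ = 2*(2*θ) by ring, Real.cos_two_mul]
  rw [h4θ]
  have harg : 2 * c ^ 2 * (2*u^2 - 1) + 38 * c ^ 2 +
      8 * (c - 1) * (3 * c - 1) * u - 32 * c + 8
      = (2*c*u + 6*c - 4)^2 - 8*(1-2*c)*(1-u) := by ring
  rw [harg]
  set A := 2*c*u + 6*c - 4 with hAdef
  set R := 8*(1-2*c)*(1-u) with hRdef
  -- positivity of the discriminant
  have s1 : 0 ≤ (1/2 + c) * (1 - u) := mul_nonneg (by linarith) (by linarith)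
  have s1' : 0 ≤ (1/2 - c) * (1 - u) := mul_nonneg (by linarith) (by linarith)
  have hA_ub : A ≤ 8*c - 4 + 3*θ^2 := by
    rw [hAdef]
    linarith [s1, haux1]
  have hA_neg : A ≤ -(13/16)*(4-8*c) := by linarith [hA_ub, hθb]
  have hA_sq : (13/16)^2*(4-8*c)^2 ≤ A^2 := by
    have h1 : (0:ℝ) ≤ (13/16)*(4-8*c) := by linarith
    have h2 : (13/16)*(4-8*c) ≤ -A := by linarith
    have h3 := mul_self_le_mul_self h1 h2
    calc (13/16)^2*(4-8*c)^2 = ((13/16)*(4-8*c)) * ((13/16)*(4-8*c)) := by ring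
      _ ≤ (-A) * (-A) := h3
      _ = A^2 := by ring
  have hR_ub : R ≤ 48*θ^2 := by
    rw [hRdef]
    linarith [s1, haux1]
  have hS : 0 ≤ A^2 - R := by
    linarith [hA_sq, hR_ub, hθc, sq_nonneg (4-8*c)]
  set Δ := Real.sqrt (A^2 - R) with hΔdef
  have hΔsq : Δ^2 = A^2 - R := Real.sq_sqrt hS
  have hΔ0 : 0 ≤ Δ := Real.sqrt_nonneg _
  set P := 16*c - 8 + (2 - 8*c)*θ^2 with hPdef
  set M := -4*c*P - 8*(1-2*c) with hMdef
  set G := P^2 - 2*A*P + R with hGdef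
  clear_value θ u A R Δ P M G
  have hGid : G = (4 - 16*c)*θ^4 + M*(u - 1 + 2*θ^2) := by
    rw [hGdef, hMdef, hPdef, hAdef, hRdef]; ring
  -- bounds on P, M, G
  have q2 : 0 ≤ (1/2 + c) * θ^2 := mul_nonneg (by linarith) hθ0
  have q3 : 0 ≤ (1/2 - c) * θ^2 := mul_nonneg (by linarith) hθ0
  have q1 : 0 ≤ (1/2 - c) * (1/4 - θ^2) := mul_nonneg (by linarith) (by linarith)
  have hP_lb : -18 ≤ P := by
    rw [hPdef]
    linarith [q3, hc1, hθa, hθ0]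
  have hP_ub : P ≤ 2 := by
    rw [hPdef]
    linarith [q1, hc2, hθ0]
  have r_a : 0 ≤ (1/2 + c) * (P + 18) := mul_nonneg (by linarith) (by linarith)
  have r_b : 0 ≤ (1/2 - c) * (2 - P) := mul_nonneg (by linarith) (by linarith)
  have r_c : 0 ≤ (1/2 + c) * (2 - P) := mul_nonneg (by linarith) (by linarith)
  have r_d : 0 ≤ (1/2 - c) * (P + 18) := mul_nonneg (by linarith) (by linarith)
  have hM_abs : |M| ≤ 52 := by
    rw [abs_le]
    constructor <;>
    · rw [hMdef]
      linarith [r_a, r_b, r_c, r_d, hP_lb, hP_ub, hc1, hc2]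
  have hθ40 : (0:ℝ) ≤ θ^4 := by positivity
  have hMw : |M*(u - 1 + 2*θ^2)| ≤ 52*(5/6*θ^4) := by
    rw [abs_mul]
    exact mul_le_mul hM_abs hw (abs_nonneg _) (by norm_num)
  have h4c : |(4 - 16*c)*θ^4| ≤ 12*θ^4 := by
    rw [abs_mul, abs_of_nonneg hθ40]
    exact mul_le_mul_of_nonneg_right (abs_le.mpr ⟨by linarith, by linarith⟩) hθ40
  have hG_abs : |G| ≤ 56*θ^4 := by
    rw [hGid]
    calc |(4 - 16*c)*θ^4 + M*(u - 1 + 2*θ^2)|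
        ≤ |(4 - 16*c)*θ^4| + |M*(u - 1 + 2*θ^2)| := abs_add_le _ _
      _ ≤ 56*θ^4 := by linarith
  -- the key algebraic identity
  have hid : (A - Δ - P) * (P - A - Δ) = -G := by
    rw [hGdef]; linear_combination hΔsq
  -- the denominator is bounded away from zero
  have hPA : P - A ≤ -(4-8*c)/4 := by
    rw [hPdef, hAdef]
    linarith [s1', haux1, q2, hθb, hc2]
  have hD_neg : P - A - Δ ≤ -(4-8*c)/4 := by linarith
  have hD_abs : (4-8*c)/4 ≤ |P - A - Δ| := by
    rw [abs_of_nonpos (by linarith)]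
    linarith
  have hE_key : |A - Δ - P| * ((4-8*c)/4) ≤ 56*θ^4 := by
    calc |A - Δ - P| * ((4-8*c)/4)
        ≤ |A - Δ - P| * |P - A - Δ| := mul_le_mul_of_nonneg_left hD_abs (abs_nonneg _)
      _ = |(A - Δ - P)*(P - A - Δ)| := (abs_mul _ _).symm
      _ = |G| := by rw [hid, abs_neg]
      _ ≤ 56*θ^4 := hG_abs
  have hθ4 : θ^4 = ω^4*h^4/16 := by rw [hθdef]; ring
  have hE2 : |A - Δ - P| ≤ 14*ω^4*h^4/(4-8*c) := by
    rw [le_div_iff₀ hd]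
    linarith [hE_key, hθ4.le, hθ4.ge]
  -- rewrite the expression
  have hne : h ≠ 0 := ne_of_gt h0
  have hX : (-4 + 2*c*(u + 3) - Δ) / (2*(h/2)^2) - (-(4 - 8*c)/(h/2)^2 + (1 - 4*c)*ω^2)
      = 2*(A - Δ - P)/h^2 := by
    rw [hAdef, hPdef, hθdef]
    field_simp
    ring
  rw [hX]
  have hh2 : (0:ℝ) < h^2 := by positivity
  have habs2 : |2*(A - Δ - P)/h^2| = 2*|A - Δ - P|/h^2 := by
    rw [abs_div, abs_mul, abs_of_pos hh2, abs_two]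
  rw [habs2, abs_of_pos hh2, div_le_iff₀ hh2]
  have hfin : 28*ω^4/(4-8*c)*h^2*h^2 = 2*(14*ω^4*h^4/(4-8*c)) := by
    field_simp; ring
  linarith [hE2, hfin.ge, hfin.le]
end

section
/- For a smooth function u, the second block-row approximation (1/(h/2)²)[(u(x - h/2) - 2u(x) + u(x + h/2)) + c(u(x - h) - 3u(x - h/2) + 3u(x) - u(x + h/2))] equals u''(x) - (h/2)·c·u'''(x) + (h/2)²·(1/12 + c/2)·u''''(x) + O(h³); in particular the O(h) truncation error terms of the two block rows have opposite signs. -/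
open Real Asymptotics Filter
open scoped ContDiff

private lemma taylor_key : ∀ (n : ℕ) (f : ℝ → ℝ), ContDiff ℝ ∞ f →
    (fun t : ℝ => f t - ∑ k ∈ Finset.range (n + 1),
        iteratedDeriv k f 0 * t ^ k / (k.factorial : ℝ))
      =O[nhds (0 : ℝ)] fun t => t ^ (n + 1) := by
  intro n
  induction n with
  | zero =>
      intro f hf
      have h := ((hf.differentiable (by simp)) 0).isBigO_sub
      simpa using h
  | succ n IH =>
      intro f hf
      set g : ℝ → ℝ := fun t => f t - ∑ k ∈ Finset.range (n + 2),
        iteratedDeriv k f 0 * t ^ k / (k.factorial : ℝ) with hgdef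
      have hg0 : g 0 = 0 := by
        simp [hgdef, Finset.sum_range_succ']
      have hderiv : ∀ t : ℝ, HasDerivAt g
          (deriv f t - ∑ k ∈ Finset.range (n + 1),
            iteratedDeriv k (deriv f) 0 * t ^ k / (k.factorial : ℝ)) t := by
        intro t
        have h1 : HasDerivAt f (deriv f t) t := ((hf.differentiable (by simp)) t).hasDerivAt
        have h2 : HasDerivAt (fun t : ℝ => ∑ k ∈ Finset.range (n + 2),
            iteratedDeriv k f 0 * t ^ k / (k.factorial : ℝ))
            (∑ k ∈ Finset.range (n + 2),
              iteratedDeriv k f 0 * ((k : ℝ) * t ^ (k - 1)) / (k.factorial : ℝ)) t := by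
          apply HasDerivAt.fun_sum
          intro k _
          exact ((hasDerivAt_pow k t).const_mul _).div_const _
        have hsum : (∑ k ∈ Finset.range (n + 2),
              iteratedDeriv k f 0 * ((k : ℝ) * t ^ (k - 1)) / (k.factorial : ℝ))
            = ∑ k ∈ Finset.range (n + 1),
              iteratedDeriv k (deriv f) 0 * t ^ k / (k.factorial : ℝ) := by
          rw [Finset.sum_range_succ']
          simp only [Nat.cast_zero, zero_mul, mul_zero, zero_div, add_zero,
            Nat.cast_succ, Nat.succ_sub_one]
          apply Finset.sum_congr rfl
          intro k _
          rw [← iteratedDeriv_succ']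
          have hfac : ((k + 1).factorial : ℝ) = ((k : ℝ) + 1) * (k.factorial : ℝ) := by
            push_cast [Nat.factorial_succ]; ring
          rw [hfac]
          have hk : (k.factorial : ℝ) ≠ 0 := by positivity
          have hk1 : ((k : ℝ) + 1) ≠ 0 := by positivity
          field_simp
        have := h1.sub h2
        rw [hsum] at this
        exact this
      have hgd : deriv g = fun t => deriv f t - ∑ k ∈ Finset.range (n + 1),
          iteratedDeriv k (deriv f) 0 * t ^ k / (k.factorial : ℝ) :=
        funext fun t => (hderiv t).deriv
      have hdf : ContDiff ℝ ∞ (deriv f) := (contDiff_infty_iff_deriv.mp hf).2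
      have hIH : (deriv g) =O[nhds (0 : ℝ)] fun t => t ^ (n + 1) := by
        rw [hgd]; exact IH (deriv f) hdf
      obtain ⟨C, hC0, hCw⟩ := hIH.exists_nonneg
      have hb := hCw.bound
      rw [Metric.eventually_nhds_iff] at hb
      obtain ⟨δ, hδ, hbound⟩ := hb
      rw [isBigO_iff]
      refine ⟨C, ?_⟩
      rw [Metric.eventually_nhds_iff]
      refine ⟨δ, hδ, ?_⟩
      intro t ht
      rw [Real.dist_eq, sub_zero] at ht
      have habs : ∀ s ∈ Set.uIcc (0 : ℝ) t, |s| ≤ |t| := by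
        intro s hs
        rcases Set.mem_uIcc.mp hs with ⟨h1, h2⟩ | ⟨h1, h2⟩ <;>
          · rw [abs_le]
            constructor <;> nlinarith [neg_abs_le t, le_abs_self t, abs_nonneg t]
      have key : ‖g t - g 0‖ ≤ (C * |t| ^ (n + 1)) * ‖t - 0‖ := by
        apply (convex_uIcc (0 : ℝ) t).norm_image_sub_le_of_norm_deriv_le
          (fun s _ => (hderiv s).differentiableAt)
          (fun s hs => ?_) Set.left_mem_uIcc Set.right_mem_uIcc
        have hs1 : |s| ≤ |t| := habs s hs
        have hs2 : dist s 0 < δ := by rw [Real.dist_eq, sub_zero]; exact lt_of_le_of_lt hs1 ht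
        calc ‖deriv g s‖ ≤ C * ‖s ^ (n + 1)‖ := hbound hs2
          _ = C * |s| ^ (n + 1) := by rw [Real.norm_eq_abs, abs_pow]
          _ ≤ C * |t| ^ (n + 1) := by
              apply mul_le_mul_of_nonneg_left _ hC0
              exact pow_le_pow_left₀ (abs_nonneg s) hs1 _
      rw [hg0, sub_zero, sub_zero] at key
      calc ‖g t‖ ≤ C * |t| ^ (n + 1) * ‖t‖ := key
        _ = C * ‖t ^ (n + 1 + 1)‖ := by
            rw [Real.norm_eq_abs, Real.norm_eq_abs, abs_pow, pow_succ]; ring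

/-- Truncation error of the second row of the two-point block scheme:
`(1/(h/2)²)[(u(x-h/2) - 2u(x) + u(x+h/2)) + c(u(x-h) - 3u(x-h/2) + 3u(x) - u(x+h/2))]
 = u''(x) - (h/2)c u'''(x) + (h/2)²(1/12 + c/2) u''''(x) + O(h³)`: the `O(h)`
terms of the two rows have opposite signs. -/
theorem stmt_10 (u : ℝ → ℝ) (hu : ContDiff ℝ (⊤ : ℕ∞) u) (c x : ℝ) :
    (fun h : ℝ =>
        (1 / (h / 2) ^ 2) *
          ((u (x - h / 2) - 2 * u x + u (x + h / 2)) +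
            c * (u (x - h) - 3 * u (x - h / 2) + 3 * u x - u (x + h / 2))) -
        (iteratedDeriv 2 u x - (h / 2) * c * iteratedDeriv 3 u x +
          (h / 2) ^ 2 * (1 / 12 + c / 2) * iteratedDeriv 4 u x))
      =O[nhdsWithin 0 (Set.Ioi 0)] fun h : ℝ => h ^ 3 := by
  set d1 := iteratedDeriv 1 u x with hd1
  set d2 := iteratedDeriv 2 u x with hd2
  set d3 := iteratedDeriv 3 u x with hd3
  set d4 := iteratedDeriv 4 u x with hd4
  set R : ℝ → ℝ → ℝ := fun a h => u (x + a * h) -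
      (u x + d1 * (a * h) + d2 * (a * h) ^ 2 / 2 + d3 * (a * h) ^ 3 / 6 +
        d4 * (a * h) ^ 4 / 24) with hRdef
  have hR : ∀ a : ℝ, (fun h : ℝ => R a h) =O[nhdsWithin 0 (Set.Ioi 0)] fun h => h ^ 5 := by
    intro a
    have hF : ContDiff ℝ ∞ (fun t : ℝ => u (x + t)) :=
      (hu.of_le (by simp)).comp (contDiff_const.add contDiff_id)
    have h1 := taylor_key 4 _ hF
    have h2 : ∀ k, iteratedDeriv k (fun t : ℝ => u (x + t)) 0 = iteratedDeriv k u x := by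
      intro k
      rw [iteratedDeriv_comp_const_add]
      simp
    have hfun : (fun t : ℝ => u (x + t) - ∑ k ∈ Finset.range 5,
          iteratedDeriv k (fun t : ℝ => u (x + t)) 0 * t ^ k / (k.factorial : ℝ))
        = fun t : ℝ => u (x + t) -
            (u x + d1 * t + d2 * t ^ 2 / 2 + d3 * t ^ 3 / 6 + d4 * t ^ 4 / 24) := by
      funext t
      rw [show Finset.range 5 = Finset.range (4 + 1) from rfl, Finset.sum_range_succ, Finset.sum_range_succ,
        Finset.sum_range_succ, Finset.sum_range_succ, Finset.sum_range_one]
      simp only [h2, hd1, hd2, hd3, hd4]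
      norm_num [Nat.factorial]
    rw [hfun] at h1
    have htend : Filter.Tendsto (fun h : ℝ => a * h) (nhdsWithin 0 (Set.Ioi 0)) (nhds 0) := by
      have h : Filter.Tendsto (fun h : ℝ => a * h) (nhds (0 : ℝ)) (nhds (a * 0)) :=
        (continuous_const.mul continuous_id).tendsto 0
      rw [mul_zero] at h
      exact h.mono_left nhdsWithin_le_nhds
    have h4 := h1.comp_tendsto htend
    have h5 : (fun h : ℝ => (a * h) ^ 5) =O[nhdsWithin 0 (Set.Ioi 0)] fun h : ℝ => h ^ 5 := by
      simpa [mul_pow] using isBigO_const_mul_self (a ^ 5) (fun h : ℝ => h ^ 5)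
        (nhdsWithin (0 : ℝ) (Set.Ioi 0))
    exact (h4.trans h5)
  have hS : (fun h : ℝ => (R (-(1/2)) h + R (1/2) h) +
      c * (R (-1) h - 3 * R (-(1/2)) h - R (1/2) h))
      =O[nhdsWithin 0 (Set.Ioi 0)] fun h => h ^ 5 := by
    exact ((hR _).add (hR _)).add
      ((((hR _).sub ((hR _).const_mul_left 3)).sub (hR _)).const_mul_left c)
  have hEq : (fun h : ℝ =>
        (1 / (h / 2) ^ 2) *
          ((u (x - h / 2) - 2 * u x + u (x + h / 2)) +
            c * (u (x - h) - 3 * u (x - h / 2) + 3 * u x - u (x + h / 2))) -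
        (d2 - (h / 2) * c * d3 + (h / 2) ^ 2 * (1 / 12 + c / 2) * d4))
      =ᶠ[nhdsWithin 0 (Set.Ioi 0)] fun h : ℝ =>
        (4 / h ^ 2) * ((R (-(1/2)) h + R (1/2) h) +
          c * (R (-1) h - 3 * R (-(1/2)) h - R (1/2) h)) := by
    filter_upwards [self_mem_nhdsWithin] with h hh
    have hne : h ≠ 0 := ne_of_gt hh
    have e1 : x - h / 2 = x + (-(1/2)) * h := by ring
    have e2 : x + h / 2 = x + (1/2) * h := by ring
    have e3 : x - h = x + (-1) * h := by ring
    rw [e1, e2, e3]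
    simp only [hRdef]
    field_simp
    ring
  refine hEq.trans_isBigO ?_
  have h6 : (fun h : ℝ => (4 / h ^ 2) * ((R (-(1/2)) h + R (1/2) h) +
      c * (R (-1) h - 3 * R (-(1/2)) h - R (1/2) h)))
      =O[nhdsWithin 0 (Set.Ioi 0)] fun h : ℝ => (4 / h ^ 2) * h ^ 5 :=
    (isBigO_refl (fun h : ℝ => 4 / h ^ 2) _).mul hS
  refine h6.trans ?_
  have h7 : (fun h : ℝ => (4 / h ^ 2) * h ^ 5) =ᶠ[nhdsWithin 0 (Set.Ioi 0)]
      fun h : ℝ => 4 * h ^ 3 := by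
    filter_upwards [self_mem_nhdsWithin] with h hh
    have hne : h ≠ 0 := ne_of_gt hh
    field_simp
  exact h7.trans_isBigO (isBigO_const_mul_self 4 _ _)
end

section
/- For a smooth function u and c ∈ ℝ, the three-point block approximation (1/(4(h/3)²))[(4u(x-h/3) - 8u(x) + 4u(x+h/3)) + c(-u(x-h/3) + 3u(x) - 3u(x+h/3) + u(x+2h/3))] equals u''(x) + O(h), with the O(h) leading term equal to (c/4)·(h/3)·u'''(x). -/
open Real Asymptotics
open scoped ContDiff

/-- MVT step: if `g 0 = 0` and `g' = o(t^n)` then `g = o(t^(n+1))`. -/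
lemma step_littleO {g g' : ℝ → ℝ} (h0 : g 0 = 0) (hd : ∀ t, HasDerivAt g (g' t) t)
    (n : ℕ) (ho : g' =o[nhds 0] fun t => t ^ n) :
    g =o[nhds 0] fun t => t ^ (n + 1) := by
  rw [Asymptotics.isLittleO_iff] at ho ⊢
  intro ε hε
  have hb := ho (c := ε) hε
  rw [Metric.eventually_nhds_iff] at hb ⊢
  obtain ⟨δ, hδ, hbd⟩ := hb
  refine ⟨δ, hδ, fun {h} hhδ => ?_⟩
  simp only [Real.dist_eq, sub_zero] at hhδ hbd
  have key : ‖g h‖ ≤ ε * |h| ^ n * |h| := by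
    rcases lt_trichotomy h 0 with hneg | hzero | hpos
    · have := norm_image_sub_le_of_norm_deriv_le_segment'
        (f := g) (f' := g') (a := h) (b := 0) (C := ε * |h| ^ n)
        (fun t ht => (hd t).hasDerivWithinAt) (fun t ht => by
          have ht1 : |t| < δ := by
            rw [abs_lt]; constructor
            · linarith [ht.1, neg_abs_le h, abs_lt.mp hhδ]
            · linarith [ht.2, hδ]
          have := hbd ht1
          refine this.trans ?_
          have : ‖(t : ℝ) ^ n‖ = |t| ^ n := by rw [Real.norm_eq_abs, abs_pow]
          rw [this]
          have htabs : |t| ≤ |h| := by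
            rw [abs_of_nonpos (le_of_lt ht.2), abs_of_neg hneg]
            linarith [ht.1]
          exact mul_le_mul_of_nonneg_left (pow_le_pow_left₀ (abs_nonneg t) htabs n) hε.le)
        0 (by constructor <;> [exact hneg.le; exact le_refl 0])
      rw [h0] at this
      simp only [zero_sub, norm_neg, sub_zero] at this
      calc ‖g h‖ ≤ ε * |h| ^ n * -h := this
        _ = ε * |h| ^ n * |h| := by rw [abs_of_neg hneg]
    · simp [hzero, h0]
    · have := norm_image_sub_le_of_norm_deriv_le_segment'
        (f := g) (f' := g') (a := 0) (b := h) (C := ε * |h| ^ n)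
        (fun t ht => (hd t).hasDerivWithinAt) (fun t ht => by
          have ht1 : |t| < δ := by
            rw [abs_lt]; constructor
            · linarith [ht.1, hδ]
            · linarith [ht.2, abs_lt.mp hhδ, le_abs_self h]
          have := hbd ht1
          refine this.trans ?_
          have : ‖(t : ℝ) ^ n‖ = |t| ^ n := by rw [Real.norm_eq_abs, abs_pow]
          rw [this]
          have htabs : |t| ≤ |h| := by
            rw [abs_of_nonneg ht.1, abs_of_pos hpos]
            linarith [ht.2]
          exact mul_le_mul_of_nonneg_left (pow_le_pow_left₀ (abs_nonneg t) htabs n) hε.le)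
        h (by constructor <;> [exact hpos.le; exact le_refl h])
      rw [h0, sub_zero, sub_zero] at this
      calc ‖g h‖ ≤ ε * |h| ^ n * h := this
        _ = ε * |h| ^ n * |h| := by rw [abs_of_pos hpos]
  calc ‖g h‖ ≤ ε * |h| ^ n * |h| := key
    _ = ε * ‖h ^ (n + 1)‖ := by
        rw [Real.norm_eq_abs, abs_pow, pow_succ]; ring

/-- Taylor expansion with little-o remainder for smooth functions. -/
lemma taylor_littleO (n : ℕ) : ∀ (u : ℝ → ℝ), ContDiff ℝ (∞ : WithTop ℕ∞) u → ∀ (x : ℝ),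
    (fun t => u (x + t) - ∑ i ∈ Finset.range (n + 1),
      t ^ i / (Nat.factorial i) * iteratedDeriv i u x) =o[nhds 0] fun t => t ^ n := by
  induction n with
    | zero =>
      intro u hu x
      simp only [Finset.range_one, Finset.sum_singleton, pow_zero, Nat.factorial_zero,
        Nat.cast_one, iteratedDeriv_zero]
      rw [Asymptotics.isLittleO_one_iff]
      have hc : Continuous u := hu.continuous
      have : Filter.Tendsto (fun t : ℝ => u (x + t)) (nhds 0) (nhds (u (x + 0))) := by
        exact (hc.comp (continuous_const.add continuous_id)).tendsto 0
      simpa using this.sub_const (u x)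
    | succ n ih =>
      intro u hu x
      have hu' : ContDiff ℝ (∞ : WithTop ℕ∞) (deriv u) := (contDiff_infty_iff_deriv.mp hu).2
      have hdiff : Differentiable ℝ u := (contDiff_infty_iff_deriv.mp hu).1
      set g : ℝ → ℝ := fun t => u (x + t) - ∑ i ∈ Finset.range (n + 2),
        t ^ i / (Nat.factorial i) * iteratedDeriv i u x with hg
      set g' : ℝ → ℝ := fun t => deriv u (x + t) - ∑ i ∈ Finset.range (n + 1),
        t ^ i / (Nat.factorial i) * iteratedDeriv i (deriv u) x with hg'
      have h0 : g 0 = 0 := by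
        simp only [hg, Finset.sum_range_succ']
        simp [Nat.factorial]
      have hd : ∀ t, HasDerivAt g (g' t) t := by
        intro t
        have h1 : HasDerivAt (fun t : ℝ => u (x + t)) (deriv u (x + t)) t := by
          have := ((hdiff (x + t)).hasDerivAt).comp t
            ((hasDerivAt_id t).const_add x)
          rw [mul_one] at this
          exact this
        have h2 : HasDerivAt (fun t : ℝ => ∑ i ∈ Finset.range (n + 2),
            t ^ i / (Nat.factorial i) * iteratedDeriv i u x)
            (∑ i ∈ Finset.range (n + 1),
              t ^ i / (Nat.factorial i) * iteratedDeriv i (deriv u) x) t := by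
          have h3 : HasDerivAt (fun t : ℝ => ∑ i ∈ Finset.range (n + 2),
              t ^ i / (Nat.factorial i) * iteratedDeriv i u x)
              (∑ i ∈ Finset.range (n + 2),
                (i * t ^ (i - 1) / (Nat.factorial i)) * iteratedDeriv i u x) t := by
            apply HasDerivAt.fun_sum
            intro i _
            have := ((hasDerivAt_pow i t).div_const (Nat.factorial i)).mul_const
              (iteratedDeriv i u x)
            convert this using 1
          convert h3 using 1
          rw [Finset.sum_range_succ'
            (fun i => (i : ℝ) * t ^ (i - 1) / (Nat.factorial i) * iteratedDeriv i u x) (n + 1)]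
          simp only [Nat.cast_zero, zero_mul, zero_div, add_zero]
          apply Finset.sum_congr rfl
          intro i _
          rw [← iteratedDeriv_succ']
          have hfac : (Nat.factorial (i + 1) : ℝ) = (i + 1) * Nat.factorial i := by
            rw [Nat.factorial_succ]; push_cast; ring
          rw [hfac]
          have hi : (i : ℝ) + 1 ≠ 0 := by positivity
          have hif : (Nat.factorial i : ℝ) ≠ 0 := by positivity
          simp only [Nat.add_sub_cancel]
          push_cast
          field_simp
        exact h1.sub h2
      have ho : g' =o[nhds 0] fun t => t ^ n := ih (deriv u) hu' x
      exact step_littleO h0 hd (n := n) ho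

/-- First row of the three-point block scheme:
`(1/(4(h/3)²))[(4u(x-h/3) - 8u(x) + 4u(x+h/3)) + c(-u(x-h/3) + 3u(x) - 3u(x+h/3) + u(x+2h/3))]
 = u''(x) + (c/4)(h/3) u'''(x) + O(h²)`, i.e. it equals `u''(x) + O(h)` with
leading error term `(c/4)(h/3)u'''(x)`. -/
theorem stmt_12 (u : ℝ → ℝ) (hu : ContDiff ℝ (⊤ : ℕ∞) u) (c x : ℝ) :
    (fun h : ℝ =>
        (1 / (4 * (h / 3) ^ 2)) *
          ((4 * u (x - h / 3) - 8 * u x + 4 * u (x + h / 3)) +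
            c * (-u (x - h / 3) + 3 * u x - 3 * u (x + h / 3) + u (x + 2 * h / 3))) -
        (iteratedDeriv 2 u x + c / 4 * (h / 3) * iteratedDeriv 3 u x))
      =O[nhdsWithin 0 (Set.Ioi 0)] fun h : ℝ => h ^ 2 := by
  set l : Filter ℝ := nhdsWithin 0 (Set.Ioi 0) with hl
  have hu' : ContDiff ℝ (∞ : WithTop ℕ∞) u := hu.of_le (by simp)
  -- Taylor remainders at scaled arguments
  set R : ℝ → ℝ → ℝ := fun a h => u (x + a * h) - ∑ i ∈ Finset.range 5,
    (a * h) ^ i / (Nat.factorial i) * iteratedDeriv i u x with hR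
  have hTa : ∀ a : ℝ, (fun h => R a h) =o[l] fun h => h ^ 4 := by
    intro a
    have base := taylor_littleO 4 u hu' x
    have htend : Filter.Tendsto (fun h : ℝ => a * h) l (nhds 0) := by
      have : Filter.Tendsto (fun h : ℝ => a * h) (nhds 0) (nhds (a * 0)) :=
        (continuous_const.mul continuous_id).tendsto 0
      rw [mul_zero] at this
      exact this.mono_left nhdsWithin_le_nhds
    have hcomp := base.comp_tendsto htend
    have heq : (fun h : ℝ => (a * h) ^ 4) = fun h : ℝ => a ^ 4 * h ^ 4 := by
      funext h; ring
    have : (fun h => R a h) =o[l] fun h : ℝ => a ^ 4 * h ^ 4 := by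
      rw [← heq]; exact hcomp
    exact this.trans_isBigO (Asymptotics.isBigO_const_mul_self (a ^ 4) (fun h => h ^ 4) l)
  set F : ℝ → ℝ := fun h => 4 * R (-1/3) h + 4 * R (1/3) h +
    c * (-R (-1/3) h - 3 * R (1/3) h + R (2/3) h) with hF
  have hFo : F =o[l] fun h => h ^ 4 := by
    have h1 := (hTa (-1/3)).const_mul_left 4
    have h2 := (hTa (1/3)).const_mul_left 4
    have h3 := ((((hTa (-1/3)).neg_left).sub ((hTa (1/3)).const_mul_left 3)).add
      (hTa (2/3))).const_mul_left c
    exact (h1.add h2).add h3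
  set K : ℝ := (1/12 + c/8)/9 * iteratedDeriv 4 u x with hK
  have heqv : (fun h : ℝ =>
        (1 / (4 * (h / 3) ^ 2)) *
          ((4 * u (x - h / 3) - 8 * u x + 4 * u (x + h / 3)) +
            c * (-u (x - h / 3) + 3 * u x - 3 * u (x + h / 3) + u (x + 2 * h / 3))) -
        (iteratedDeriv 2 u x + c / 4 * (h / 3) * iteratedDeriv 3 u x))
      =ᶠ[l] fun h => (9 / (4 * h ^ 2)) * F h + K * h ^ 2 := by
    filter_upwards [self_mem_nhdsWithin] with h (hh : (0:ℝ) < h)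
    have hne : h ≠ 0 := ne_of_gt hh
    have e1 : x + (-1/3 : ℝ) * h = x - h / 3 := by ring
    have e2 : x + (1/3 : ℝ) * h = x + h / 3 := by ring
    have e3 : x + (2/3 : ℝ) * h = x + 2 * h / 3 := by ring
    simp only [hF, hR, hK, e1, e2, e3, Finset.sum_range_succ, Finset.range_one,
      Finset.sum_singleton, Nat.factorial, iteratedDeriv_zero]
    push_cast
    field_simp
    ring
  rw [Asymptotics.isBigO_congr heqv (Filter.EventuallyEq.refl l (fun h : ℝ => h ^ 2))]
  have t1 : (fun h : ℝ => (9 / (4 * h ^ 2)) * F h) =O[l] fun h : ℝ => h ^ 2 := by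
    have hbo : (fun h : ℝ => (9 / (4 * h ^ 2)) * F h)
        =o[l] fun h : ℝ => (9 / (4 * h ^ 2)) * h ^ 4 :=
      (Asymptotics.isBigO_refl (fun h : ℝ => 9 / (4 * h ^ 2)) l).mul_isLittleO hFo
    have heq2 : (fun h : ℝ => (9 / (4 * h ^ 2)) * h ^ 4) =ᶠ[l] fun h : ℝ => 9/4 * h ^ 2 := by
      filter_upwards [self_mem_nhdsWithin] with h (hh : (0:ℝ) < h)
      have hne : h ≠ 0 := ne_of_gt hh
      field_simp
    have : (fun h : ℝ => (9 / (4 * h ^ 2)) * h ^ 4) =O[l] fun h : ℝ => h ^ 2 := by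
      rw [Asymptotics.isBigO_congr heq2 (Filter.EventuallyEq.refl l (fun h : ℝ => h ^ 2))]
      exact Asymptotics.isBigO_const_mul_self (9/4) (fun h => h ^ 2) l
    exact hbo.isBigO.trans this
  have t2 : (fun h : ℝ => K * h ^ 2) =O[l] fun h : ℝ => h ^ 2 :=
    Asymptotics.isBigO_const_mul_self K (fun h => h ^ 2) l
  exact t1.add t2
end
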